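/- arXiv:1902.09414 — 4 statements merged into one kernel-verified Lean document; each statement's English description precedes it below -/
import Mathlib

section
/- Let k ≥ 3 and let P and Q be finite subsets of {a_0,a_1}^*. If P ∪ Q·{a_2,…,a_{k−1}} is a maximal prefix code over A_k, then P is a maximal prefix code over the two-letter alphabet {a_0,a_1} and Q = spref(P). -/
/-- A prefix code over the alphabet `Fin k`: any two prefix-comparable elements are equal. -/
def IsPrefixCode {k : ℕ} (P : Set (List (Fin k))) : Prop :=
  ∀ p ∈ P, ∀ q ∈ P, (p <+: q ∨ q <+: p) → p = q

/-- A maximal prefix code over `Fin k`: a prefix code that is not a proper subset of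
another prefix code over `Fin k`. -/
def IsMaximalPrefixCode {k : ℕ} (P : Set (List (Fin k))) : Prop :=
  IsPrefixCode P ∧ ∀ Q : Set (List (Fin k)), IsPrefixCode Q → P ⊆ Q → P = Q

/-- A string over the two-letter subalphabet {a₀,a₁} of `Fin k`. -/
def Binary {k : ℕ} (w : List (Fin k)) : Prop := ∀ a ∈ w, a.val < 2

/-- A maximal prefix code over the two-letter subalphabet {a₀,a₁} of `Fin k`:
a prefix code all of whose elements are binary, maximal among such prefix codes. -/
def IsMaximalBinaryPrefixCode {k : ℕ} (P : Set (List (Fin k))) : Prop :=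
  IsPrefixCode P ∧ (∀ w ∈ P, Binary w) ∧
    ∀ Q : Set (List (Fin k)), IsPrefixCode Q → (∀ w ∈ Q, Binary w) → P ⊆ Q → P = Q

/-- The set of strict prefixes of elements of `P`. -/
def spref {k : ℕ} (P : Set (List (Fin k))) : Set (List (Fin k)) :=
  {x | ∃ p ∈ P, x <+: p ∧ x ≠ p}

lemma prefix_concat_cases {k : ℕ} {r x : List (Fin k)} {a : Fin k}
    (h : r <+: x ++ [a]) : r <+: x ∨ r = x ++ [a] := by
  rcases Nat.lt_or_ge r.length (x ++ [a]).length with hl | hl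
  · left
    refine List.prefix_of_prefix_length_le h (List.prefix_append x [a]) ?_
    have : r.length < x.length + 1 := by simpa using hl
    omega
  · right
    exact h.eq_of_length (le_antisymm h.length_le hl)

lemma exists_comparable {k : ℕ} {R : Set (List (Fin k))}
    (h : IsMaximalPrefixCode R) (w : List (Fin k)) :
    ∃ r ∈ R, r <+: w ∨ w <+: r := by
  by_contra hc
  push_neg at hc
  have hpc : IsPrefixCode (insert w R) := by
    intro p hp q hq hpq
    rcases hp with rfl | hp <;> rcases hq with rfl | hq
    · rfl
    · exact absurd hpq (by have := hc q hq; tauto)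
    · exact absurd hpq (by have := hc p hp; tauto)
    · exact h.1 p hp q hq hpq
  have heq := h.2 _ hpc (Set.subset_insert w R)
  have hw : w ∈ R := heq ▸ Set.mem_insert w R
  exact (hc w hw).1 (List.prefix_refl w)

/-- If `k ≥ 3`, `P, Q` are finite sets of binary strings, and
`P ∪ Q·{a₂,…,a_{k−1}}` is a maximal prefix code over `A_k`, then `P` is a maximal
prefix code over `{a₀,a₁}` and `Q = spref(P)`. -/
theorem stmt1 {k : ℕ} (hk : 3 ≤ k) (P Q : Set (List (Fin k)))
    (hPfin : P.Finite) (hQfin : Q.Finite)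
    (hPbin : ∀ w ∈ P, Binary w) (hQbin : ∀ w ∈ Q, Binary w)
    (hmax : IsMaximalPrefixCode
      (P ∪ {w | ∃ u ∈ Q, ∃ a : Fin k, 2 ≤ a.val ∧ w = u ++ [a]})) :
    IsMaximalBinaryPrefixCode P ∧ Q = spref P := by
  set a2 : Fin k := ⟨2, by omega⟩ with ha2
  set R := P ∪ {w | ∃ u ∈ Q, ∃ a : Fin k, 2 ≤ a.val ∧ w = u ++ [a]} with hR
  have hcomp := exists_comparable hmax
  have hRpc := hmax.1
  have ha2mem : a2 ∈ [a2] := by simp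
  -- Q ⊆ spref P
  have hQsub : Q ⊆ spref P := by
    intro u hu
    set NP := hPfin.toFinset.sup List.length with hNP
    set NQ := hQfin.toFinset.sup List.length with hNQ
    set N := NP + NQ + 2 with hN
    set w := u ++ List.replicate N (⟨0, by omega⟩ : Fin k) with hw
    have hwlen : w.length = u.length + N := by simp [hw]
    have hlenP : ∀ p ∈ P, p.length ≤ NP := fun p hp =>
      Finset.le_sup (hPfin.mem_toFinset.mpr hp)
    have hlenQ : ∀ q ∈ Q, q.length ≤ NQ := fun q hq =>
      Finset.le_sup (hQfin.mem_toFinset.mpr hq)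
    obtain ⟨r, hr, hcase⟩ := hcomp w
    have hrPw : r ∈ P ∧ r <+: w := by
      rcases hr with hrP | ⟨v, hv, a, hav, rfl⟩
      · refine ⟨hrP, ?_⟩
        rcases hcase with h | h
        · exact h
        · have h1 := h.length_le
          have h2 := hlenP r hrP
          omega
      · exfalso
        rcases hcase with h | h
        · have haw : a ∈ w := h.subset (by simp)
          have hwbin : Binary w := by
            intro b hb
            rw [hw, List.mem_append] at hb
            rcases hb with hb | hb
            · exact hQbin u hu b hb
            · have := List.eq_of_mem_replicate hb
              simp [this]
          have := hwbin a haw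
          omega
        · have h1 := h.length_le
          have h2 := hlenQ v hv
          simp at h1
          omega
    obtain ⟨hrP, hrw⟩ := hrPw
    have huw : u <+: w := List.prefix_append u _
    have hua2 : u ++ [a2] ∈ R := Or.inr ⟨u, hu, a2, by simp [ha2], rfl⟩
    have hne : r ≠ u ++ [a2] := by
      intro hre
      have := hPbin r hrP a2 (by rw [hre]; simp)
      simp [ha2] at this
    rcases List.prefix_or_prefix_of_prefix hrw huw with h | h
    · exact absurd (hRpc r (Or.inl hrP) _ hua2
        (Or.inl (h.trans (List.prefix_append u [a2])))) hne
    · refine ⟨r, hrP, h, ?_⟩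
      rintro rfl
      exact hne (hRpc u (Or.inl hrP) _ hua2 (Or.inl (List.prefix_append u [a2])))
  -- spref P ⊆ Q
  have hSsub : spref P ⊆ Q := by
    rintro x ⟨p, hp, hxp, hxne⟩
    obtain ⟨r, hr, hcase⟩ := hcomp (x ++ [a2])
    rcases hr with hrP | ⟨v, hv, a, hav, rfl⟩
    · exfalso
      have hrbin := hPbin r hrP
      rcases hcase with h | h
      · rcases prefix_concat_cases h with h' | rfl
        · have hrp : r = p := hRpc r (Or.inl hrP) p (Or.inl hp) (Or.inl (h'.trans hxp))
          subst hrp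
          have h1 := h'.length_le
          have h2 := hxp.length_le
          exact hxne (hxp.eq_of_length (le_antisymm h2 h1))
        · have := hrbin a2 (by simp)
          simp [ha2] at this
      · have := hrbin a2 (h.subset (by simp))
        simp [ha2] at this
    · rcases hcase with h | h
      · rcases prefix_concat_cases h with h' | heq
        · exfalso
          have hxbin : Binary x := fun b hb => hPbin p hp b (hxp.subset hb)
          have := hxbin a (h'.subset (by simp))
          omega
        · have hvx : v = x := by
            have := congrArg List.dropLast heq
            simpa using this
          exact hvx ▸ hv
      · rcases prefix_concat_cases h with h' | heq
        · exfalso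
          have := hQbin v hv a2 (h'.subset (by simp))
          simp [ha2] at this
        · have hvx : v = x := by
            have := congrArg List.dropLast heq.symm
            simpa using this
          exact hvx ▸ hv
  -- binary completeness of P
  have hPcomp : ∀ w, Binary w → ∃ p ∈ P, p <+: w ∨ w <+: p := by
    intro w hwbin
    obtain ⟨r, hr, hcase⟩ := hcomp w
    rcases hr with hrP | ⟨v, hv, a, hav, rfl⟩
    · exact ⟨r, hrP, hcase⟩
    · rcases hcase with h | h
      · exfalso
        have := hwbin a (h.subset (by simp))
        omega
      · rcases prefix_concat_cases h with h' | rfl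
        · obtain ⟨p, hp, hvp, _⟩ := hQsub hv
          exact ⟨p, hp, Or.inr (h'.trans hvp)⟩
        · exfalso
          have := hwbin a (by simp)
          omega
  refine ⟨⟨fun p hp q hq h => hRpc p (Or.inl hp) q (Or.inl hq) h, hPbin, ?_⟩,
    Set.Subset.antisymm hQsub hSsub⟩
  intro Q' hQ'pc hQ'bin hPQ'
  apply Set.Subset.antisymm hPQ'
  intro w hw
  obtain ⟨p, hp, hc⟩ := hPcomp w (hQ'bin w hw)
  have hpw : p = w := hQ'pc p (hPQ' hp) w hw hc
  exact hpw ▸ hp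
end

section
/- Let P be a finite maximal prefix code over the two-letter alphabet {a_0,a_1} and let u ∈ spref(P). Then there is exactly one integer m ≥ 0 such that u a_1 a_0^m ∈ P; equivalently, the set P ∩ u a_1 a_0^* is a singleton. -/
/-- If `P` is a finite maximal prefix code over `{a₀,a₁}` and `u ∈ spref(P)`,
then there is exactly one `m ≥ 0` with `u a₁ a₀^m ∈ P`. -/
theorem stmt4 (P : Set (List (Fin 2))) (hfin : P.Finite)
    (hmax : IsMaximalPrefixCode P) (u : List (Fin 2)) (hu : u ∈ spref P) :
    ∃! m : ℕ, u ++ (1 : Fin 2) :: List.replicate m (0 : Fin 2) ∈ P := by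
  obtain ⟨q, hq, huq, hune⟩ := hu
  -- completeness: every word is prefix-comparable with some element of P
  have hcomp : ∀ w : List (Fin 2), ∃ p ∈ P, p <+: w ∨ w <+: p := by
    intro w
    by_contra hw
    push_neg at hw
    have hQ : IsPrefixCode (P ∪ {w}) := by
      rintro p (hp | hp) r (hr | hr) hpr
      · exact hmax.1 p hp r hr hpr
      · simp only [Set.mem_singleton_iff] at hr; subst hr
        exact absurd hpr (by have := hw p hp; tauto)
      · simp only [Set.mem_singleton_iff] at hp; subst hp
        exact absurd hpr (by have := hw r hr; tauto)
      · simp only [Set.mem_singleton_iff] at hp hr; rw [hp, hr]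
    have := hmax.2 _ hQ Set.subset_union_left
    have hwP : w ∈ P := this ▸ Set.mem_union_right _ rfl
    exact (hw w hwP).1 List.prefix_rfl
  -- bound on lengths
  obtain ⟨N, hN⟩ := (hfin.image List.length).bddAbove
  have hNb : ∀ p ∈ P, p.length ≤ N := fun p hp => hN ⟨p, hp, rfl⟩
  -- existence
  set w : List (Fin 2) := u ++ (1 : Fin 2) :: List.replicate N (0 : Fin 2) with hwdef
  obtain ⟨p, hp, hcase⟩ := hcomp w
  have hlenw : w.length = u.length + 1 + N := by simp [hwdef]; omega
  have hpw : p <+: w := by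
    rcases hcase with h | h
    · exact h
    · have := h.length_le
      have := hNb p hp
      omega
  have hup : u.length < p.length := by
    by_contra hle
    push_neg at hle
    have huw : u <+: w := ⟨_, rfl⟩
    have hpu : p <+: u := List.prefix_of_prefix_length_le hpw huw hle
    have hpq : p = q := hmax.1 p hp q hq (Or.inl (hpu.trans huq))
    have : u = q := huq.eq_of_length_le (hpq ▸ hpu).length_le
    exact hune this
    -- done
  have hupre : u <+: p := List.prefix_of_prefix_length_le ⟨_, rfl⟩ hpw (by omega)
  obtain ⟨r, hr⟩ := hupre
  have hrpre : r <+: (1 : Fin 2) :: List.replicate N (0 : Fin 2) := by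
    rw [← hr] at hpw
    exact (List.prefix_append_right_inj u).mp hpw
  have hrlen : r.length ≤ N + 1 := by
    have := hrpre.length_le; simpa using this
  have hrne : 1 ≤ r.length := by
    have := hr ▸ hup
    simp at this
    omega
  have hrval : r = (1 : Fin 2) :: List.replicate (r.length - 1) (0 : Fin 2) := by
    have ht := List.prefix_iff_eq_take.mp hrpre
    rw [List.take_cons (by omega), List.take_replicate,
      min_eq_left (by omega : r.length - 1 ≤ N)] at ht
    exact ht
  refine ⟨r.length - 1, show u ++ (1 : Fin 2) :: List.replicate (r.length - 1) (0 : Fin 2) ∈ P by rw [← hrval, hr]; exact hp, ?_⟩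
  -- uniqueness
  intro m hm
  have key : ∀ m₁ m₂ : ℕ,
      u ++ (1 : Fin 2) :: List.replicate m₁ (0 : Fin 2) ∈ P →
      u ++ (1 : Fin 2) :: List.replicate m₂ (0 : Fin 2) ∈ P →
      m₁ ≤ m₂ → m₁ = m₂ := by
    intro m₁ m₂ h1 h2 hle
    have hpref : u ++ (1 : Fin 2) :: List.replicate m₁ (0 : Fin 2) <+:
        u ++ (1 : Fin 2) :: List.replicate m₂ (0 : Fin 2) := by
      refine (List.prefix_append_right_inj u).mpr ?_
      refine List.cons_prefix_cons.mpr ⟨rfl, ?_⟩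
      exact ⟨List.replicate (m₂ - m₁) 0, by rw [← List.replicate_add]; congr 1; omega⟩
    have := hmax.1 _ h1 _ h2 (Or.inl hpref)
    have hl := congrArg List.length this
    simp at hl
    omega
  rcases le_total m (r.length - 1) with h | h
  · exact key m _ hm (by rw [← hrval, hr]; exact hp) h
  · exact (key _ m (by rw [← hrval, hr]; exact hp) hm h).symm
end

section
/- Let P be a finite maximal prefix code over the two-letter alphabet {a_0,a_1} with |P| ≥ 2. Then the map sending each p ∈ P ∖ a_0^*, written in its unique form p = u a_1 a_0^m (u a string over {a_0,a_1}, m ≥ 0), to the string u is a bijection from P ∖ a_0^* onto spref(P). Consequently, for any additional letter a_i, the map u a_1 a_0^m ↦ u a_i is a bijection from P ∖ a_0^* onto spref(P)·{a_i}. -/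
/-- Every binary string that is not a power of `a₀` decomposes as `u a₁ a₀^m`. -/
lemma binary_decomp {k : ℕ} (hk : 2 ≤ k) (w : List (Fin k)) (hb : Binary w)
    (hne : ¬ ∃ m : ℕ, w = List.replicate m (⟨0, by omega⟩ : Fin k)) :
    ∃ u m, w = u ++ (⟨1, by omega⟩ : Fin k) :: List.replicate m (⟨0, by omega⟩ : Fin k) := by
  induction w using List.reverseRecOn with
  | nil => exact absurd ⟨0, rfl⟩ hne
  | append_singleton w x ih =>
    have hx : x.val < 2 := hb x (by simp)
    have hbw : Binary w := fun a ha => hb a (by simp [ha])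
    have hx01 : x.val = 0 ∨ x.val = 1 := by omega
    rcases hx01 with h | h
    · have hx0 : x = (⟨0, Nat.lt_of_lt_of_le Nat.zero_lt_two hk⟩ : Fin k) := Fin.ext h
      rw [hx0] at hne ⊢
      by_cases hw : ∃ m, w = List.replicate m (⟨0, by omega⟩ : Fin k)
      · rcases hw with ⟨m, rfl⟩
        exact absurd ⟨m + 1, by rw [List.replicate_succ']⟩ hne
      · rcases ih hbw hw with ⟨u, m, rfl⟩
        exact ⟨u, m + 1, by simp [List.replicate_succ']⟩
    · have hx1 : x = (⟨1, Nat.lt_of_lt_of_le Nat.one_lt_two hk⟩ : Fin k) := Fin.ext h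
      rw [hx1]
      exact ⟨w, 0, by simp⟩

/-- Completeness: every binary string is prefix-comparable with some element of a
maximal binary prefix code. -/
lemma binary_complete {k : ℕ} (P : Set (List (Fin k))) (hmax : IsMaximalBinaryPrefixCode P)
    (x : List (Fin k)) (hbx : Binary x) : ∃ q ∈ P, x <+: q ∨ q <+: x := by
  by_contra h
  push_neg at h
  have hxP : x ∉ P := fun hx => (h x hx).1 (List.prefix_refl x)
  have hQ : IsPrefixCode (insert x P) := by
    intro p hp q hq hpq
    rcases hp with rfl | hp <;> rcases hq with rfl | hq
    · rfl
    · exact absurd hpq (by have := h q hq; tauto)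
    · exact absurd hpq (by have := h p hp; tauto)
    · exact hmax.1 p hp q hq hpq
  have heq := hmax.2.2 (insert x P) hQ (by
     intro w hw
     rcases hw with rfl | hw
     · exact hbx
     · exact hmax.2.1 w hw) (Set.subset_insert x P)
  exact hxP (heq ▸ Set.mem_insert x P)

/-- For a finite maximal prefix code `P` over `{a₀,a₁}` with `|P| ≥ 2`,
the map sending `p = u a₁ a₀^m ∈ P ∖ a₀^*` to `u` is a bijection from `P ∖ a₀^*`
onto `spref(P)`; consequently for any additional letter `a_i` the map
`u a₁ a₀^m ↦ u a_i` is a bijection from `P ∖ a₀^*` onto `spref(P)·{a_i}`. -/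
theorem stmt5 {k : ℕ} (hk : 3 ≤ k) (P : Set (List (Fin k))) (hfin : P.Finite)
    (hmax : IsMaximalBinaryPrefixCode P) (hcard : 2 ≤ P.ncard)
    (f : List (Fin k) → List (Fin k))
    (hf : ∀ u : List (Fin k), ∀ m : ℕ,
      f (u ++ (⟨1, by omega⟩ : Fin k) :: List.replicate m (⟨0, by omega⟩ : Fin k)) = u) :
    Set.BijOn f (P \ {w | ∃ m : ℕ, w = List.replicate m (⟨0, by omega⟩ : Fin k)}) (spref P) ∧
    ∀ a : Fin k, 2 ≤ a.val →
      Set.BijOn (fun w => f w ++ [a])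
        (P \ {w | ∃ m : ℕ, w = List.replicate m (⟨0, by omega⟩ : Fin k)})
        {x | ∃ u ∈ spref P, x = u ++ [a]} := by
  classical
  have hk2 : 2 ≤ k := by omega
  have hpc := hmax.1
  have hbin := hmax.2.1
  set a0 : Fin k := ⟨0, by omega⟩ with ha0
  set a1 : Fin k := ⟨1, by omega⟩ with ha1
  set S : Set (List (Fin k)) := P \ {w | ∃ m : ℕ, w = List.replicate m a0} with hS
  -- decomposition of elements of S
  have hdec : ∀ p ∈ S, ∃ u m, p = u ++ a1 :: List.replicate m a0 := by
    intro p hp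
    exact binary_decomp hk2 p (hbin p hp.1) hp.2
  have hfval : ∀ (u : List (Fin k)) (m : ℕ), f (u ++ a1 :: List.replicate m a0) = u :=
    fun u m => hf u m
  -- maps to
  have hmap : Set.MapsTo f S (spref P) := by
    intro p hp
    obtain ⟨u, m, hp'⟩ := hdec p hp
    have hfp : f p = u := by rw [hp']; exact hfval u m
    rw [hfp]
    refine ⟨p, hp.1, ⟨a1 :: List.replicate m a0, hp'.symm⟩, ?_⟩
    intro h
    have := congrArg List.length h
    simp [hp'] at this
  -- injectivity
  have hinj : Set.InjOn f S := by
    intro p hp q hq hfeq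
    obtain ⟨u, m, hp'⟩ := hdec p hp
    obtain ⟨v, n, hq'⟩ := hdec q hq
    have hu : f p = u := by rw [hp']; exact hfval u m
    have hv : f q = v := by rw [hq']; exact hfval v n
    have huv : u = v := by rw [← hu, ← hv, hfeq]
    subst huv
    have hrep : ∀ m n : ℕ, m ≤ n →
        (u ++ a1 :: List.replicate m a0) <+: (u ++ a1 :: List.replicate n a0) := by
      intro m n hmn
      refine ⟨List.replicate (n - m) a0, ?_⟩
      have : List.replicate m a0 ++ List.replicate (n - m) a0 = List.replicate n a0 := by
        rw [← List.replicate_add]; congr 1; omega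
      simp [← this]
    have hcomp : p <+: q ∨ q <+: p := by
      rcases le_total m n with h | h
      · left; rw [hp', hq']; exact hrep m n h
      · right; rw [hp', hq']; exact hrep n m h
    exact hpc p hp.1 q hq.1 hcomp
  -- surjectivity
  have hsurj : Set.SurjOn f S (spref P) := by
    intro v hv
    obtain ⟨p, hpP, hvp, hvne⟩ := hv
    have hbv : Binary v := fun a ha => hbin p hpP a (hvp.sublist.subset ha)
    set N := hfin.toFinset.sup List.length with hN
    have hlen : ∀ q ∈ P, q.length ≤ N := fun q hq =>
      Finset.le_sup (hfin.mem_toFinset.mpr hq)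
    set x := v ++ a1 :: List.replicate N a0 with hx
    have hbx : Binary x := by
      intro b hb
      rw [hx] at hb
      simp only [List.mem_append, List.mem_cons, List.mem_replicate] at hb
      rcases hb with hb | hb | hb
      · exact hbv b hb
      · rw [hb]; simp [ha1]
      · rw [hb.2]; simp [ha0]
    obtain ⟨q, hqP, hcompq⟩ := binary_complete P hmax x hbx
    have hqx : q <+: x := by
      rcases hcompq with h | h
      · exfalso
        have h1 := h.length_le
        have h2 := hlen q hqP
        rw [hx] at h1; simp at h1; omega
      · exact h
    have hva1 : (v ++ [a1]) <+: x := ⟨List.replicate N a0, by simp [hx]⟩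
    -- show q has the form v ++ a1 :: replicate j a0
    have hform : ∃ j, q = v ++ a1 :: List.replicate j a0 := by
      rcases List.prefix_or_prefix_of_prefix hqx hva1 with h | h
      · -- q <+: v ++ [a1]
        by_cases hqv : q <+: v
        · exfalso
          have hqp : q = p := hpc q hqP p hpP (Or.inl (hqv.trans hvp))
          subst hqp
          exact hvne (hvp.eq_of_length (le_antisymm hvp.length_le hqv.length_le))
        · have hql : v.length < q.length := by
            by_contra hle
            push_neg at hle
            exact hqv (List.prefix_of_prefix_length_le h ⟨[a1], rfl⟩ hle)
          have hqeq : q = v ++ [a1] := h.eq_of_length (by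
            have := h.length_le
            simp at this ⊢
            omega)
          exact ⟨0, by simpa using hqeq⟩
      · -- v ++ [a1] <+: q
        obtain ⟨t, ht⟩ := h
        have htpre : t <+: List.replicate N a0 := by
          have : (v ++ [a1]) ++ t <+: (v ++ [a1]) ++ List.replicate N a0 := by
            rw [ht]; simpa [hx] using hqx
          exact (List.prefix_append_right_inj (v ++ [a1])).mp this
        have htrep : t = List.replicate t.length a0 :=
          List.eq_replicate_iff.mpr ⟨rfl, fun b hb =>
            (List.eq_of_mem_replicate (htpre.sublist.subset hb))⟩
        exact ⟨t.length, by rw [← ht, htrep]; simp⟩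
    obtain ⟨j, hj⟩ := hform
    have hqS : q ∈ S := by
      refine ⟨hqP, ?_⟩
      rintro ⟨m, hm⟩
      have : a1 ∈ q := by rw [hj]; simp
      rw [hm] at this
      have := List.eq_of_mem_replicate this
      rw [ha0, ha1] at this
      exact absurd (congrArg Fin.val this) (by simp)
    exact ⟨q, hqS, by rw [hj]; exact hfval v j⟩
  refine ⟨⟨hmap, hinj, hsurj⟩, ?_⟩
  intro a _
  refine ⟨?_, ?_, ?_⟩
  · intro p hp
    exact ⟨f p, hmap hp, rfl⟩
  · intro p hp q hq h
    simp only [List.append_left_inj] at h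
    exact hinj hp hq h
  · rintro x ⟨u, hu, rfl⟩
    obtain ⟨p, hpS, hfp⟩ := hsurj hu
    exact ⟨p, hpS, by simp [hfp]⟩
end

section
/- Let k ≥ 3, let P and Q be finite maximal prefix codes over the two-letter subalphabet {a_0,a_1} of A_k, and let g : P → Q be a bijection. Set P̂ = {a_0} ∪ a_1·P and Q̂ = {a_0} ∪ a_1·Q (finite maximal prefix codes over {a_0,a_1}). Define a map ι(g) on P̂ ∪ spref(P̂)·{a_2,…,a_{k−1}} as follows: ι(g)(a_0) = a_0; ι(g)(a_1 p) = a_1 g(p) for each p ∈ P; and for each u ∈ spref(P̂) and each i with 2 ≤ i ≤ k−1, let u a_1 a_0^m be the unique element of P̂ ∩ u a_1 a_0^* (it has the form a_1 p for a unique p ∈ P), write a_1 g(p) uniquely as v a_1 a_0^{m'}, and set ι(g)(u a_i) = v a_i. Then ι(g) is a well-defined bijection from the finite maximal prefix code P̂ ∪ spref(P̂)·{a_2,…,a_{k−1}} over A_k onto the finite maximal prefix code Q̂ ∪ spref(Q̂)·{a_2,…,a_{k−1}} over A_k; it maps strings over {a_0,a_1} to strings over {a_0,a_1}, and for each i it maps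 strings of the form x a_i with x ∈ {a_0,a_1}^* to strings of the same form. -/
open Set

variable {k : ℕ}

section Binary

@[simp] theorem binary_nil : Binary ([] : List (Fin k)) := List.forall_mem_nil _

@[simp] theorem binary_cons {a : Fin k} {w : List (Fin k)} :
    Binary (a :: w) ↔ a.val < 2 ∧ Binary w :=
  List.forall_mem_cons

@[simp] theorem binary_append {u v : List (Fin k)} : Binary (u ++ v) ↔ Binary u ∧ Binary v :=
  List.forall_mem_append

theorem Binary.of_prefix {u w : List (Fin k)} (hw : Binary w) (h : u <+: w) : Binary u :=
  fun a ha => hw a (h.subset ha)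

theorem not_binary_append_singleton {u : List (Fin k)} {a : Fin k} (ha : 2 ≤ a.val) :
    ¬ Binary (u ++ [a]) := by
  simp only [binary_append, binary_cons, binary_nil]
  omega

theorem binary_or_exists_eq_append_cons (w : List (Fin k)) :
    Binary w ∨ ∃ x b r, Binary x ∧ 2 ≤ b.val ∧ w = x ++ b :: r := by
  induction w with
  | nil => exact Or.inl binary_nil
  | cons a w ih =>
    by_cases ha : a.val < 2
    · rcases ih with hw | ⟨x, b, r, hx, hb, rfl⟩
      · exact Or.inl (binary_cons.2 ⟨ha, hw⟩)
      · exact Or.inr ⟨a :: x, b, r, binary_cons.2 ⟨ha, hx⟩, hb, rfl⟩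
    · exact Or.inr ⟨[], a, w, binary_nil, by omega, rfl⟩

end Binary

section Maximality

variable {S : Set (List (Fin k))}

theorem finite_spref (hS : S.Finite) : (spref S).Finite :=
  (hS.biUnion fun p _ => p.inits.finite_toSet).subset
    fun x ⟨p, hp, hx, _⟩ => mem_biUnion hp ((List.mem_inits x p).2 hx)

theorem binary_of_mem_spref (hS : ∀ w ∈ S, Binary w) {u : List (Fin k)} (hu : u ∈ spref S) :
    Binary u :=
  let ⟨t, ht, hut, _⟩ := hu
  (hS t ht).of_prefix hut

theorem IsPrefixCode.not_prefix_of_mem_spref (hS : IsPrefixCode S) {s u : List (Fin k)}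
    (hs : s ∈ S) (hu : u ∈ spref S) : ¬ s <+: u := by
  intro hsu
  obtain ⟨t, ht, hut, hne⟩ := hu
  obtain rfl := hS s hs t ht (Or.inl (hsu.trans hut))
  exact hne (hut.eq_of_length (le_antisymm hut.length_le hsu.length_le))

theorem isMaximalPrefixCode_of_forall_exists_prefix (hS : IsPrefixCode S)
    (hcomp : ∀ w, ∃ s ∈ S, s <+: w ∨ w <+: s) : IsMaximalPrefixCode S := by
  refine ⟨hS, fun T hT hST => hST.antisymm fun t ht => ?_⟩
  obtain ⟨s, hs, hst⟩ := hcomp t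
  rwa [← hT s (hST hs) t ht hst]

theorem isMaximalBinaryPrefixCode_iff : IsMaximalBinaryPrefixCode S ↔
    IsPrefixCode S ∧ (∀ w ∈ S, Binary w) ∧
      ∀ w, Binary w → ∃ s ∈ S, s <+: w ∨ w <+: s := by
  refine ⟨fun ⟨hS, hbin, hmax⟩ => ⟨hS, hbin, fun w hw => ?_⟩,
    fun ⟨hS, hbin, hcomp⟩ => ⟨hS, hbin, fun T hT hTbin hST => hST.antisymm fun t ht => ?_⟩⟩
  · by_contra! hfar
    have hins : IsPrefixCode (insert w S) := by
      rintro p (rfl | hp) q (rfl | hq) hpq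
      · rfl
      · exact absurd hpq.symm (by simpa [not_or] using hfar q hq)
      · exact absurd hpq (by simpa [not_or] using hfar p hp)
      · exact hS p hp q hq hpq
    have hwS : w ∈ S := by
      rw [hmax _ hins (by simpa [forall_mem_insert] using ⟨hw, hbin⟩) (subset_insert w S)]
      exact mem_insert w S
    exact (hfar w hwS).1 List.prefix_rfl
  · obtain ⟨s, hs, hst⟩ := hcomp t (hTbin t ht)
    rwa [← hT s (hST hs) t ht hst]

end Maximality

theorem bijOn_append_singleton_of_rel {α : Type*} {f : List α → List α} {A B : Set (List α)}
    {L : α → Prop} (R : List α → List α → Prop) (hAB : ∀ u ∈ A, ∃ v ∈ B, R u v)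
    (hBA : ∀ v ∈ B, ∃ u ∈ A, R u v) (hR : ∀ u u' v, R u v → R u' v → u = u')
    (hf : ∀ u ∈ A, ∀ v, R u v → ∀ a, L a → f (u ++ [a]) = v ++ [a]) :
    BijOn f {w | ∃ u ∈ A, ∃ a, L a ∧ w = u ++ [a]} {w | ∃ v ∈ B, ∃ a, L a ∧ w = v ++ [a]} := by
  refine ⟨?_, ?_, ?_⟩
  · rintro _ ⟨u, hu, a, ha, rfl⟩
    obtain ⟨v, hv, huv⟩ := hAB u hu
    exact ⟨v, hv, a, ha, hf u hu v huv a ha⟩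
  · rintro _ ⟨u, hu, a, ha, rfl⟩ _ ⟨u', hu', a', ha', rfl⟩ heq
    obtain ⟨v, -, huv⟩ := hAB u hu
    obtain ⟨v', -, huv'⟩ := hAB u' hu'
    rw [hf u hu v huv a ha, hf u' hu' v' huv' a' ha', List.append_singleton_inj] at heq
    obtain ⟨rfl, rfl⟩ := heq
    rw [hR u u' v huv huv']
  · rintro _ ⟨v, hv, a, ha, rfl⟩
    obtain ⟨u, hu, huv⟩ := hBA v hv
    exact ⟨u ++ [a], ⟨u, hu, a, ha, rfl⟩, hf u hu v huv a ha⟩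

theorem eq_and_eq_of_replicate_append_cons {α : Type*} {a b : α} (hab : a ≠ b)
    {s s' : List α} : ∀ {m m' : ℕ},
      List.replicate m a ++ b :: s = List.replicate m' a ++ b :: s' → m = m' ∧ s = s'
  | 0, 0, h => by simpa using h
  | 0, _ + 1, h => by simp [List.replicate_succ] at h; exact absurd h.1.symm hab
  | _ + 1, 0, h => by simp [List.replicate_succ] at h; exact absurd h.1 hab
  | _ + 1, _ + 1, h => by
    simp only [List.replicate_succ, List.cons_append, List.cons.injEq, true_and] at h
    simpa using eq_and_eq_of_replicate_append_cons hab h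

namespace PrefixCode

def a₀ (hk : 1 < k) : Fin k := ⟨0, by omega⟩

def a₁ (hk : 1 < k) : Fin k := ⟨1, hk⟩

/-- The set `u a₁ a₀^*`. -/
def ray (hk : 1 < k) (u : List (Fin k)) : Set (List (Fin k)) :=
  {w | ∃ m, w = u ++ a₁ hk :: List.replicate m (a₀ hk)}

/-- `P̂ = {a₀} ∪ a₁·P`. -/
def hat (hk : 1 < k) (P : Set (List (Fin k))) : Set (List (Fin k)) :=
  {[a₀ hk]} ∪ {w | ∃ p ∈ P, w = a₁ hk :: p}

def highExtensions (S : Set (List (Fin k))) : Set (List (Fin k)) :=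
  {w | ∃ u ∈ spref S, ∃ a : Fin k, 2 ≤ a.val ∧ w = u ++ [a]}

/-- `S ∪ spref(S)·{a₂,…,a_{k−1}}`. -/
def extendCode (S : Set (List (Fin k))) : Set (List (Fin k)) :=
  S ∪ highExtensions S

variable {hk : 1 < k}

@[simp] theorem a₀_val : (a₀ hk).val = 0 := rfl

@[simp] theorem a₁_val : (a₁ hk).val = 1 := rfl

@[simp] theorem a₀_ne_a₁ : a₀ hk ≠ a₁ hk := by simp [Fin.ext_iff]

@[simp] theorem a₁_ne_a₀ : a₁ hk ≠ a₀ hk := a₀_ne_a₁.symm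

theorem eq_a₀_or_eq_a₁ {b : Fin k} (hb : b.val < 2) : b = a₀ hk ∨ b = a₁ hk := by
  by_cases h : b.val = 0
  · exact Or.inl (Fin.ext h)
  · exact Or.inr (Fin.ext (by simp only [a₁_val]; omega))

section Ray

variable {u u' w w' : List (Fin k)}

theorem eq_of_mem_ray_of_mem_ray (hu : w ∈ ray hk u) (hu' : w ∈ ray hk u') : u = u' := by
  obtain ⟨m, rfl⟩ := hu
  obtain ⟨m', hm'⟩ := hu'
  have := congrArg List.reverse hm'
  simp only [List.reverse_append, List.reverse_cons, List.reverse_replicate,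
    List.append_assoc, List.singleton_append] at this
  exact List.reverse_injective (eq_and_eq_of_replicate_append_cons a₀_ne_a₁ this).2

theorem mem_spref_of_mem_ray {S : Set (List (Fin k))} (hw : w ∈ S) (hwu : w ∈ ray hk u) :
    u ∈ spref S := by
  obtain ⟨m, rfl⟩ := hwu
  exact ⟨_, hw, List.prefix_append _ _, fun h => by simpa using congrArg List.length h⟩

theorem _root_.IsPrefixCode.eq_of_mem_ray {S : Set (List (Fin k))} (hS : IsPrefixCode S)
    (hw : w ∈ S) (hw' : w' ∈ S) (hwu : w ∈ ray hk u) (hw'u : w' ∈ ray hk u) : w = w' := by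
  obtain ⟨m, rfl⟩ := hwu
  obtain ⟨m', rfl⟩ := hw'u
  refine hS _ hw _ hw' ?_
  simp only [List.prefix_append_right_inj, List.cons_prefix_cons, true_and,
    List.prefix_replicate_iff, List.length_replicate, and_true]
  omega

theorem exists_mem_ray_of_binary (hw : Binary w) (h1 : a₁ hk ∈ w) : ∃ u, w ∈ ray hk u := by
  induction w using List.reverseRecOn with
  | nil => simp at h1
  | append_singleton w b ih =>
    rw [binary_append, binary_cons] at hw
    rcases eq_a₀_or_eq_a₁ (hk := hk) hw.2.1 with rfl | rfl
    · obtain ⟨u, m, rfl⟩ := ih hw.1 (by simpa using h1)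
      exact ⟨u, m + 1, by simp [List.replicate_succ']⟩
    · exact ⟨w, 0, rfl⟩

theorem mem_ray_of_prefix {s : List (Fin k)} {n : ℕ}
    (hs : s <+: u ++ a₁ hk :: List.replicate n (a₀ hk)) (hlen : u.length < s.length) :
    s ∈ ray hk u := by
  obtain ⟨t, rfl⟩ := List.prefix_of_prefix_length_le (List.prefix_append _ _) hs hlen.le
  rw [List.prefix_append_right_inj, List.prefix_cons_iff] at hs
  rcases hs with rfl | ⟨t', rfl, ht'⟩
  · simp at hlen
  · exact ⟨t'.length, by rw [(List.prefix_replicate_iff.1 ht').2]; simp⟩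

variable {S : Set (List (Fin k))}

theorem exists_mem_ray_of_mem_spref (hS : IsMaximalBinaryPrefixCode S) (hSfin : S.Finite)
    {u : List (Fin k)} (hu : u ∈ spref S) : ∃ w ∈ S, w ∈ ray hk u := by
  obtain ⟨hpc, hbin, hcomp⟩ := isMaximalBinaryPrefixCode_iff.1 hS
  obtain ⟨L, hL⟩ := (hSfin.image List.length).bddAbove
  -- `u a₁ a₀^L` is longer than every word of `S`, so the word of `S` comparable to it is a prefix.
  obtain ⟨s, hs, hcmp⟩ := hcomp (u ++ a₁ hk :: List.replicate L (a₀ hk))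
    (binary_append.2 ⟨binary_of_mem_spref hbin hu, binary_cons.2
      ⟨by simp, fun a ha => List.eq_of_mem_replicate ha ▸ by simp⟩⟩)
  have hsw : s <+: u ++ a₁ hk :: List.replicate L (a₀ hk) := by
    refine hcmp.resolve_right fun h => ?_
    have hlen := h.length_le
    simp only [List.length_append, List.length_cons, List.length_replicate] at hlen
    have := hL (mem_image_of_mem _ hs)
    omega
  refine ⟨s, hs, mem_ray_of_prefix hsw (not_le.1 fun hle => ?_)⟩
  exact hpc.not_prefix_of_mem_spref hs hu
    (List.prefix_of_prefix_length_le hsw (List.prefix_append _ _) hle)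

end Ray

section Hat

variable {P : Set (List (Fin k))}

theorem isPrefixCode_hat (hP : IsPrefixCode P) : IsPrefixCode (hat hk P) := by
  rintro _ (rfl | ⟨p, hp, rfl⟩) _ (rfl | ⟨q, hq, rfl⟩) hpq
  · rfl
  · simp [List.cons_prefix_cons] at hpq
  · simp [List.cons_prefix_cons] at hpq
  · simp only [List.cons_prefix_cons, true_and] at hpq
    rw [hP p hp q hq hpq]

theorem binary_of_mem_hat (hP : ∀ w ∈ P, Binary w) : ∀ w ∈ hat hk P, Binary w := by
  rintro _ (rfl | ⟨p, hp, rfl⟩)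
  · simp
  · simpa using hP p hp

theorem isMaximalBinaryPrefixCode_hat (hP : IsMaximalBinaryPrefixCode P) :
    IsMaximalBinaryPrefixCode (hat hk P) := by
  obtain ⟨hpc, hbin, hcomp⟩ := isMaximalBinaryPrefixCode_iff.1 hP
  refine isMaximalBinaryPrefixCode_iff.2 ⟨isPrefixCode_hat hpc, binary_of_mem_hat hbin, ?_⟩
  rintro (_ | ⟨b, w⟩) hw
  · exact ⟨[a₀ hk], Or.inl rfl, Or.inr List.nil_prefix⟩
  rw [binary_cons] at hw
  rcases eq_a₀_or_eq_a₁ (hk := hk) hw.1 with rfl | rfl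
  · exact ⟨[a₀ hk], Or.inl rfl, Or.inl (List.cons_prefix_cons.2 ⟨rfl, List.nil_prefix⟩)⟩
  · obtain ⟨p, hp, hpw⟩ := hcomp w hw.2
    exact ⟨a₁ hk :: p, Or.inr ⟨p, hp, rfl⟩, by simpa [List.cons_prefix_cons] using hpw⟩

theorem finite_hat (hP : P.Finite) : (hat hk P).Finite :=
  (finite_singleton _).union ((hP.image (a₁ hk :: ·)).subset
    fun _ ⟨p, hp, hw⟩ => ⟨p, hp, hw.symm⟩)

theorem exists_cons_mem_ray (hP : IsMaximalBinaryPrefixCode P) (hPfin : P.Finite)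
    {u : List (Fin k)} (hu : u ∈ spref (hat hk P)) : ∃ p ∈ P, a₁ hk :: p ∈ ray hk u := by
  obtain ⟨w, (rfl | ⟨p, hp, rfl⟩), hwu⟩ :=
    exists_mem_ray_of_mem_spref (isMaximalBinaryPrefixCode_hat hP) (finite_hat hPfin) hu
  · obtain ⟨m, hm⟩ := hwu
    simpa using congrArg (a₁ hk ∈ ·) hm
  · exact ⟨p, hp, hwu⟩

theorem exists_mem_spref_hat {p : List (Fin k)} (hP : ∀ w ∈ P, Binary w) (hp : p ∈ P) :
    ∃ v ∈ spref (hat hk P), a₁ hk :: p ∈ ray hk v := by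
  obtain ⟨v, hv⟩ := exists_mem_ray_of_binary (hk := hk) (w := a₁ hk :: p)
    (binary_cons.2 ⟨by simp, hP p hp⟩) List.mem_cons_self
  exact ⟨v, mem_spref_of_mem_ray (Or.inr ⟨p, hp, rfl⟩) hv, hv⟩

end Hat

section ExtendCode

variable {S : Set (List (Fin k))}

theorem finite_extendCode (hS : S.Finite) : (extendCode S).Finite :=
  hS.union (((finite_spref hS).image2 (fun u a => u ++ [a]) finite_univ).subset
    fun _ ⟨u, hu, a, _, hw⟩ => ⟨u, hu, a, mem_univ a, hw.symm⟩)

theorem disjoint_highExtensions (hS : ∀ w ∈ S, Binary w) : Disjoint S (highExtensions S) :=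
  disjoint_left.2 fun _ hw ⟨_, _, _, ha, hwu⟩ => not_binary_append_singleton ha (hwu ▸ hS _ hw)

theorem mem_of_mem_extendCode_of_binary {w : List (Fin k)}
    (hw : w ∈ extendCode S) (hbin : Binary w) : w ∈ S :=
  hw.resolve_right fun ⟨_, _, _, ha, hwu⟩ => not_binary_append_singleton ha (hwu ▸ hbin)

theorem mem_spref_of_append_mem_extendCode (hS : ∀ w ∈ S, Binary w) {u : List (Fin k)}
    {a : Fin k} (ha : 2 ≤ a.val) (hw : u ++ [a] ∈ extendCode S) : u ∈ spref S := by
  rcases hw with hw | ⟨v, hv, b, -, hvb⟩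
  · exact absurd (hS _ hw) (not_binary_append_singleton ha)
  · rwa [(List.append_singleton_inj.1 hvb).1]

theorem isPrefixCode_extendCode (hS : IsPrefixCode S) (hbin : ∀ w ∈ S, Binary w) :
    IsPrefixCode (extendCode S) := by
  have not_prefix_high : ∀ s ∈ S, ∀ u ∈ spref S, ∀ a : Fin k, 2 ≤ a.val → ¬ s <+: u ++ [a] := by
    intro s hs u hu a ha hsu
    rcases List.prefix_concat_iff.1 hsu with rfl | hsu
    · exact not_binary_append_singleton ha (hbin _ hs)
    · exact hS.not_prefix_of_mem_spref hs hu hsu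
  have high_not_prefix : ∀ s ∈ S, ∀ u : List (Fin k), ∀ a : Fin k, 2 ≤ a.val → ¬ u ++ [a] <+: s :=
    fun s hs u a ha hus => not_binary_append_singleton ha ((hbin s hs).of_prefix hus)
  rintro p (hp | ⟨u, hu, a, ha, rfl⟩) q (hq | ⟨u', hu', a', ha', rfl⟩) hpq
  · exact hS p hp q hq hpq
  · exact (hpq.elim (not_prefix_high p hp u' hu' a' ha') (high_not_prefix p hp u' a' ha')).elim
  · exact (hpq.elim (high_not_prefix q hq u a ha) (not_prefix_high q hq u hu a ha)).elim
  · wlog h : u ++ [a] <+: u' ++ [a'] generalizing u u' a a'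
    · exact (this u' hu' a' ha' u hu a ha hpq.symm (hpq.resolve_left h)).symm
    rcases List.prefix_concat_iff.1 h with h | h
    · exact h
    · exact absurd ((binary_of_mem_spref hbin hu').of_prefix h) (not_binary_append_singleton ha)

theorem isMaximalPrefixCode_extendCode (hS : IsMaximalBinaryPrefixCode S) :
    IsMaximalPrefixCode (extendCode S) := by
  obtain ⟨hpc, hbin, hcomp⟩ := isMaximalBinaryPrefixCode_iff.1 hS
  refine isMaximalPrefixCode_of_forall_exists_prefix (isPrefixCode_extendCode hpc hbin) ?_
  intro w
  -- Cut `w` at its first letter `b ≥ 2`, if any, and compare the binary part with `S`.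
  rcases binary_or_exists_eq_append_cons w with hw | ⟨x, b, r, hx, hb, rfl⟩
  · obtain ⟨s, hs, hsw⟩ := hcomp w hw
    exact ⟨s, Or.inl hs, hsw⟩
  obtain ⟨s, hs, hsx | hxs⟩ := hcomp x hx
  · exact ⟨s, Or.inl hs, Or.inl (hsx.trans (List.prefix_append _ _))⟩
  by_cases hxs' : x = s
  · exact ⟨s, Or.inl hs, Or.inl (hxs' ▸ List.prefix_append _ _)⟩
  · exact ⟨x ++ [b], Or.inr ⟨x, ⟨s, hs, hxs, hxs'⟩, b, hb, rfl⟩, Or.inl ⟨r, by simp⟩⟩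

end ExtendCode

section Iota

variable {P Q : Set (List (Fin k))} {g h : List (Fin k) → List (Fin k)}

/-- The relation `u ↦ v` of the definition of `ι(g)(u aᵢ) = v aᵢ`. -/
def Corresponds (hk : 1 < k) (P : Set (List (Fin k))) (g : List (Fin k) → List (Fin k))
    (u v : List (Fin k)) : Prop :=
  ∃ p ∈ P, a₁ hk :: p ∈ ray hk u ∧ a₁ hk :: g p ∈ ray hk v

theorem exists_corresponds (hP : IsMaximalBinaryPrefixCode P) (hPfin : P.Finite)
    (hQ : ∀ w ∈ Q, Binary w) (hg : MapsTo g P Q) {u : List (Fin k)}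
    (hu : u ∈ spref (hat hk P)) : ∃ v ∈ spref (hat hk Q), Corresponds hk P g u v := by
  obtain ⟨p, hp, hpu⟩ := exists_cons_mem_ray hP hPfin hu
  obtain ⟨v, hv, hgpv⟩ := exists_mem_spref_hat hQ (hg hp)
  exact ⟨v, hv, p, hp, hpu, hgpv⟩

theorem exists_corresponds_of_mem_spref_hat (hP : ∀ w ∈ P, Binary w)
    (hQ : IsMaximalBinaryPrefixCode Q) (hQfin : Q.Finite) (hg : SurjOn g P Q) {v : List (Fin k)}
    (hv : v ∈ spref (hat hk Q)) : ∃ u ∈ spref (hat hk P), Corresponds hk P g u v := by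
  obtain ⟨_, hq, hqv⟩ := exists_cons_mem_ray hQ hQfin hv
  obtain ⟨p, hp, rfl⟩ := hg hq
  obtain ⟨u, hu, hpu⟩ := exists_mem_spref_hat hP hp
  exact ⟨u, hu, p, hp, hpu, hqv⟩

theorem Corresponds.left_unique (hQ : IsPrefixCode Q) (hg : MapsTo g P Q) (hg' : InjOn g P)
    {u u' v : List (Fin k)} (huv : Corresponds hk P g u v) (hu'v : Corresponds hk P g u' v) :
    u = u' := by
  obtain ⟨p, hp, hpu, hgpv⟩ := huv
  obtain ⟨q, hq, hqu', hgqv⟩ := hu'v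
  have hgpq : a₁ hk :: g p = a₁ hk :: g q :=
    (isPrefixCode_hat (hk := hk) hQ).eq_of_mem_ray (Or.inr ⟨_, hg hp, rfl⟩)
      (Or.inr ⟨_, hg hq, rfl⟩) hgpv hgqv
  obtain rfl := hg' hp hq (List.cons_injective hgpq)
  exact eq_of_mem_ray_of_mem_ray hpu hqu'

theorem bijOn_hat (hg : BijOn g P Q) (h0 : h [a₀ hk] = [a₀ hk])
    (h1 : ∀ p ∈ P, h (a₁ hk :: p) = a₁ hk :: g p) : BijOn h (hat hk P) (hat hk Q) := by
  refine ⟨?_, ?_, ?_⟩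
  · rintro _ (rfl | ⟨p, hp, rfl⟩)
    · exact Or.inl h0
    · exact Or.inr ⟨g p, hg.mapsTo hp, h1 p hp⟩
  · rintro _ (rfl | ⟨p, hp, rfl⟩) _ (rfl | ⟨q, hq, rfl⟩) hpq
    · rfl
    · simp [h0, h1 q hq] at hpq
    · simp [h0, h1 p hp] at hpq
    · rw [h1 p hp, h1 q hq, List.cons.injEq] at hpq
      rw [hg.injOn hp hq hpq.2]
  · rintro _ (rfl | ⟨q, hq, rfl⟩)
    · exact ⟨_, Or.inl rfl, h0⟩
    · obtain ⟨p, hp, rfl⟩ := hg.surjOn hq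
      exact ⟨_, Or.inr ⟨p, hp, rfl⟩, h1 p hp⟩

theorem bijOn_extendCode_hat (hP : IsMaximalBinaryPrefixCode P) (hPfin : P.Finite)
    (hQ : IsMaximalBinaryPrefixCode Q) (hQfin : Q.Finite) (hg : BijOn g P Q)
    (h0 : h [a₀ hk] = [a₀ hk]) (h1 : ∀ p ∈ P, h (a₁ hk :: p) = a₁ hk :: g p)
    (h2 : ∀ u ∈ spref (hat hk P), ∀ v, Corresponds hk P g u v →
      ∀ a : Fin k, 2 ≤ a.val → h (u ++ [a]) = v ++ [a]) :
    BijOn h (extendCode (hat hk P)) (extendCode (hat hk Q)) := by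
  have hhat := bijOn_hat hg h0 h1
  have hhigh : BijOn h (highExtensions (hat hk P)) (highExtensions (hat hk Q)) :=
    bijOn_append_singleton_of_rel (Corresponds hk P g)
      (fun _ => exists_corresponds hP hPfin hQ.2.1 hg.mapsTo)
      (fun _ => exists_corresponds_of_mem_spref_hat hP.2.1 hQ hQfin hg.surjOn)
      (fun _ _ _ => Corresponds.left_unique hQ.1 hg.mapsTo hg.injOn) h2
  have hdisjP := disjoint_highExtensions (binary_of_mem_hat (hk := hk) hP.2.1)
  have hdisjQ := disjoint_highExtensions (binary_of_mem_hat (hk := hk) hQ.2.1)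
  refine hhat.union hhigh ((injOn_union hdisjP).2
    ⟨hhat.injOn, hhigh.injOn, fun x hx y hy hxy => ?_⟩)
  exact disjoint_left.1 hdisjQ (hhat.mapsTo hx) (hxy ▸ hhigh.mapsTo hy)

end Iota

end PrefixCode

open PrefixCode

/-- Well-definedness of the map `ι(g)` of tables. Given a bijection
`g : P → Q` between finite maximal prefix codes over `{a₀,a₁} ⊂ A_k` (`k ≥ 3`), with
`P̂ = {a₀} ∪ a₁·P`, `Q̂ = {a₀} ∪ a₁·Q`, the map `ι(g)` (fixing `a₀`, sending
`a₁ p ↦ a₁ g(p)`, and `u a_i ↦ v a_i` where `P̂ ∩ u a₁ a₀^* = {a₁ p}` and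
`a₁ g(p) = v a₁ a₀^{m'}`) is a bijection from the finite maximal prefix code
`P̂ ∪ spref(P̂)·{a₂,…,a_{k−1}}` onto `Q̂ ∪ spref(Q̂)·{a₂,…,a_{k−1}}`, mapping binary
strings to binary strings and strings of the form `x a_i` (binary `x`) to strings of
the same form. -/
theorem stmt15 {k : ℕ} (hk : 3 ≤ k)
    (P Q : Set (List (Fin k))) (hPfin : P.Finite) (hQfin : Q.Finite)
    (hP : IsMaximalBinaryPrefixCode P) (hQ : IsMaximalBinaryPrefixCode Q)
    (g : List (Fin k) → List (Fin k)) (hg : Set.BijOn g P Q)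
    (Phat Qhat : Set (List (Fin k)))
    (hPhat : Phat = {[(⟨0, by omega⟩ : Fin k)]} ∪
      {w | ∃ p ∈ P, w = (⟨1, by omega⟩ : Fin k) :: p})
    (hQhat : Qhat = {[(⟨0, by omega⟩ : Fin k)]} ∪
      {w | ∃ x ∈ Q, w = (⟨1, by omega⟩ : Fin k) :: x})
    (h : List (Fin k) → List (Fin k))
    (h0 : h [(⟨0, by omega⟩ : Fin k)] = [(⟨0, by omega⟩ : Fin k)])
    (h1 : ∀ p ∈ P, h ((⟨1, by omega⟩ : Fin k) :: p) = (⟨1, by omega⟩ : Fin k) :: g p)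
    (h2 : ∀ u ∈ spref Phat, ∀ a : Fin k, 2 ≤ a.val →
      ∀ p ∈ P, ∀ m : ℕ, ∀ v : List (Fin k), ∀ m' : ℕ,
        (⟨1, by omega⟩ : Fin k) :: p
          = u ++ (⟨1, by omega⟩ : Fin k) :: List.replicate m (⟨0, by omega⟩ : Fin k) →
        (⟨1, by omega⟩ : Fin k) :: g p
          = v ++ (⟨1, by omega⟩ : Fin k) :: List.replicate m' (⟨0, by omega⟩ : Fin k) →
        h (u ++ [a]) = v ++ [a]) :
    (Phat ∪ {w | ∃ u ∈ spref Phat, ∃ a : Fin k, 2 ≤ a.val ∧ w = u ++ [a]}).Finite ∧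
    IsMaximalPrefixCode
      (Phat ∪ {w | ∃ u ∈ spref Phat, ∃ a : Fin k, 2 ≤ a.val ∧ w = u ++ [a]}) ∧
    (Qhat ∪ {w | ∃ u ∈ spref Qhat, ∃ a : Fin k, 2 ≤ a.val ∧ w = u ++ [a]}).Finite ∧
    IsMaximalPrefixCode
      (Qhat ∪ {w | ∃ u ∈ spref Qhat, ∃ a : Fin k, 2 ≤ a.val ∧ w = u ++ [a]}) ∧
    Set.BijOn h
      (Phat ∪ {w | ∃ u ∈ spref Phat, ∃ a : Fin k, 2 ≤ a.val ∧ w = u ++ [a]})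
      (Qhat ∪ {w | ∃ u ∈ spref Qhat, ∃ a : Fin k, 2 ≤ a.val ∧ w = u ++ [a]}) ∧
    (∀ x ∈ Phat ∪ {w | ∃ u ∈ spref Phat, ∃ a : Fin k, 2 ≤ a.val ∧ w = u ++ [a]},
      Binary x → Binary (h x)) ∧
    (∀ x ∈ Phat ∪ {w | ∃ u ∈ spref Phat, ∃ a : Fin k, 2 ≤ a.val ∧ w = u ++ [a]},
      ∀ a : Fin k, 2 ≤ a.val → ∀ y : List (Fin k), Binary y → x = y ++ [a] →
        ∃ z : List (Fin k), Binary z ∧ h x = z ++ [a]) := by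
  subst hPhat hQhat
  have hk' : 1 < k := by omega
  have hι : ∀ u ∈ spref (hat hk' P), ∀ v, Corresponds hk' P g u v →
      ∀ a : Fin k, 2 ≤ a.val → h (u ++ [a]) = v ++ [a] := by
    rintro u hu v ⟨p, hp, ⟨m, hm⟩, ⟨m', hm'⟩⟩ a ha
    exact h2 u hu a ha p hp m v m' hm hm'
  refine ⟨finite_extendCode (finite_hat hPfin),
    isMaximalPrefixCode_extendCode (isMaximalBinaryPrefixCode_hat hP),
    finite_extendCode (finite_hat hQfin),
    isMaximalPrefixCode_extendCode (isMaximalBinaryPrefixCode_hat hQ),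
    bijOn_extendCode_hat hP hPfin hQ hQfin hg h0 h1 hι, ?_, ?_⟩
  · intro x hx hbin
    exact binary_of_mem_hat hQ.2.1 _
      ((bijOn_hat hg h0 h1).mapsTo (mem_of_mem_extendCode_of_binary hx hbin))
  · rintro x hx a ha y - rfl
    have hy : y ∈ spref (hat hk' P) :=
      mem_spref_of_append_mem_extendCode (binary_of_mem_hat hP.2.1) ha hx
    obtain ⟨v, hv, huv⟩ := exists_corresponds hP hPfin hQ.2.1 hg.mapsTo hy
    exact ⟨v, binary_of_mem_spref (binary_of_mem_hat hQ.2.1) hv, hι y hy v huv a ha⟩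
end
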